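/- Let r and m be integers with 2 ≤ r and m ≥ r + 4, and let ℓ2 be a nonnegative integer. If the form F(x,y) = ∑_{i=1}^{r-1} P_m(x_i) + r·∑_{j=1}^{ℓ2} P_m(y_j) is universal (equivalently, if it represents m - 4), then (r-1) + ℓ2 ≥ ⌈(m-3)/r⌉ + (r-2); i.e., the total number of variables ℓ = (r-1) + ℓ2 satisfies ℓ ≥ (m-3)/r + r - 2, so ℓ_{m,r,r-1} ≥ ⌈(m-3)/r⌉ + (r-2). -/
import Mathlib


/-- The `x`-th generalized `m`-gonal number `P_m(x) = ((m-2)x² - (m-4)x)/2`. -/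
def polygonal (m : ℕ) (x : ℤ) : ℤ := (((m : ℤ) - 2) * x ^ 2 - ((m : ℤ) - 4) * x) / 2

lemma polygonal_eq (m : ℕ) (x : ℤ) :
    2 * polygonal m x = ((m : ℤ) - 2) * x ^ 2 - ((m : ℤ) - 4) * x := by
  obtain ⟨k, hk⟩ : Even (x ^ 2 - x) := by
    have h := Int.even_mul_succ_self (x - 1)
    have : (x - 1) * (x - 1 + 1) = x ^ 2 - x := by ring
    rwa [this] at h
  have hd : ((m : ℤ) - 2) * x ^ 2 - ((m : ℤ) - 4) * x = 2 * (((m : ℤ) - 2) * k + x) := by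
    linear_combination ((m : ℤ) - 2) * hk
  rw [polygonal, hd, Int.mul_ediv_cancel_left _ (by norm_num)]

lemma polygonal_cases (m : ℕ) (hm : 6 ≤ m) (x : ℤ) :
    polygonal m x = 0 ∨ polygonal m x = 1 ∨ (m : ℤ) - 3 ≤ polygonal m x := by
  have hm' : (6 : ℤ) ≤ (m : ℤ) := by exact_mod_cast hm
  have h2 := polygonal_eq m x
  have hcase : x ≤ -1 ∨ x = 0 ∨ x = 1 ∨ 2 ≤ x := by omega
  rcases hcase with hx | hx | hx | hx
  · right; right
    nlinarith [sq_nonneg x, mul_nonneg (by linarith : (0:ℤ) ≤ (m:ℤ) - 2) (by nlinarith : x ^ 2 - 1 ≥ 0)]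
  · left; subst hx; norm_num at h2; omega
  · right; left; subst hx; norm_num at h2; omega
  · right; right
    nlinarith [mul_nonneg (by linarith : (0:ℤ) ≤ (m:ℤ) - 2) (mul_nonneg (by linarith : (0:ℤ) ≤ x - 2) (by linarith : (0:ℤ) ≤ x - 1))]

lemma polygonal_nonneg (m : ℕ) (hm : 6 ≤ m) (x : ℤ) : 0 ≤ polygonal m x := by
  have hm' : (6 : ℤ) ≤ (m : ℤ) := by exact_mod_cast hm
  rcases polygonal_cases m hm x with h | h | h <;> omega

theorem lower_bound (r m : ℕ) (hr : 2 ≤ r) (hm : r + 4 ≤ m) (ℓ₂ : ℕ)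
    (huniv : ∀ n : ℕ, 0 < n →
      ∃ (x : Fin (r - 1) → ℤ) (y : Fin ℓ₂ → ℤ),
        ∑ i, polygonal m (x i) + (r : ℤ) * ∑ j, polygonal m (y j) = (n : ℤ)) :
    (m - 3 + r - 1) / r + (r - 2) ≤ (r - 1) + ℓ₂ := by
  have hm6 : 6 ≤ m := by omega
  have hm' : (6 : ℤ) ≤ (m : ℤ) := by exact_mod_cast hm6
  have hr' : (2 : ℤ) ≤ (r : ℤ) := by exact_mod_cast hr
  have hrm : (r : ℤ) + 4 ≤ (m : ℤ) := by exact_mod_cast hm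
  obtain ⟨x, y, hrep⟩ := huniv (m - 4) (by omega)
  have hcast : ((m - 4 : ℕ) : ℤ) = (m : ℤ) - 4 := by
    have : (4 : ℕ) ≤ m := by omega
    push_cast [this]; ring
  rw [hcast] at hrep
  set a : ℤ := ∑ i, polygonal m (x i) with ha
  set b : ℤ := ∑ j, polygonal m (y j) with hb
  have ha0 : 0 ≤ a := Finset.sum_nonneg fun i _ => polygonal_nonneg m hm6 _
  have hb0 : 0 ≤ b := Finset.sum_nonneg fun j _ => polygonal_nonneg m hm6 _
  -- each x-term is ≤ 1
  have hx1 : ∀ i, polygonal m (x i) ≤ 1 := by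
    intro i
    have hle : polygonal m (x i) ≤ a :=
      Finset.single_le_sum (fun j _ => polygonal_nonneg m hm6 _) (Finset.mem_univ i)
    rcases polygonal_cases m hm6 (x i) with h | h | h
    · omega
    · omega
    · nlinarith
  have hy1 : ∀ j, polygonal m (y j) ≤ 1 := by
    intro j
    have hle : polygonal m (y j) ≤ b :=
      Finset.single_le_sum (fun j _ => polygonal_nonneg m hm6 _) (Finset.mem_univ j)
    rcases polygonal_cases m hm6 (y j) with h | h | h
    · omega
    · omega
    · nlinarith
  have haR : a ≤ (r : ℤ) - 1 := by
    have h := Finset.sum_le_card_nsmul (Finset.univ : Finset (Fin (r - 1)))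
      (fun i => polygonal m (x i)) 1 (fun i _ => hx1 i)
    simpa [Finset.card_univ, Nat.cast_sub (by omega : 1 ≤ r)] using h
  have hbR : b ≤ (ℓ₂ : ℤ) := by
    have h := Finset.sum_le_card_nsmul (Finset.univ : Finset (Fin ℓ₂))
      (fun j => polygonal m (y j)) 1 (fun j _ => hy1 j)
    simpa [Finset.card_univ] using h
  -- so r * (ℓ₂ + 1) ≥ m - 3
  have hkey : (m : ℤ) - 3 ≤ (r : ℤ) * ((ℓ₂ : ℤ) + 1) := by nlinarith
  have hkeyN : m - 3 ≤ r * (ℓ₂ + 1) := by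
    have : ((m - 3 : ℕ) : ℤ) ≤ ((r * (ℓ₂ + 1) : ℕ) : ℤ) := by push_cast; omega
    exact_mod_cast this
  have hdiv : (m - 3 + r - 1) / r ≤ ℓ₂ + 1 := by
    rw [Nat.div_le_iff_le_mul_add_pred (by omega : 0 < r)]
    omega
  omega
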